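/- Let $\mu$ be a probability measure on $\mathbb{R}$ supported in $[0,+\infty)$, $\sigma>0$, $c\in(0,1]$, $\gamma \geq 0$. Define for $z \in \mathbb{C}\setminus\mathbb{R}$, $\tau(z) = (1-\sigma^2 c\, g_\mu(z))z - \frac{\gamma}{1-\sigma^2 c\, g_\mu(z)} - \sigma^2(1-c)$, where $g_\mu$ is the Stieltjes transform of $\mu$. Then $|\Im \tau(z)| \geq |\Im z|$, and in particular $|\tau(z)|^{-1} \leq |\Im z|^{-1}$. -/

import Mathlib

/-!
Put `k = σ²c` and `w = 1 - k g_μ(z)`. From `Im (z - t)⁻¹ = -Im z / |z - t|²` and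
`z / (z - t) = 1 + t / (z - t)` one gets `Im g_μ(z) = -Im z · A` and `Im (z g_μ(z)) = -Im z · B`,
where `A = ∫ |z - t|⁻² dμ ≥ 0` and `B = ∫ t |z - t|⁻² dμ ≥ 0` because `t ≥ 0` `μ`-a.e.
Hence `Im τ(z) = Im z · (1 + k B + γ k A / |w|²)`, and the factor is at least `1`.
-/

open MeasureTheory

noncomputable def stieltjesTransform (μ : Measure ℝ) (z : ℂ) : ℂ := ∫ t, (z - t)⁻¹ ∂μ

/-- The paper's `τ(z)` is `tau (σ²c) γ (σ²(1-c)) (g_μ z) z`. -/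
noncomputable def tau (k γ r : ℝ) (g z : ℂ) : ℂ :=
  (1 - (k : ℂ) * g) * z - (γ : ℂ) / (1 - (k : ℂ) * g) - (r : ℂ)

section Stieltjes

variable {μ : Measure ℝ} {z : ℂ}

lemma sub_ofReal_ne_zero (hz : z.im ≠ 0) (t : ℝ) : z - t ≠ 0 :=
  fun h => hz (by simpa using congrArg Complex.im h)

lemma norm_inv_sub_ofReal_le (hz : z.im ≠ 0) (t : ℝ) : ‖(z - t)⁻¹‖ ≤ |z.im|⁻¹ := by
  rw [norm_inv]
  refine inv_anti₀ (abs_pos.2 hz) ?_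
  simpa using Complex.abs_im_le_norm (z - t)

lemma integrable_inv_sub_ofReal [IsFiniteMeasure μ] (hz : z.im ≠ 0) :
    Integrable (fun t : ℝ => (z - t)⁻¹) μ :=
  (integrable_const |z.im|⁻¹).mono'
    ((continuous_const.sub Complex.continuous_ofReal).inv₀
      (sub_ofReal_ne_zero hz)).aestronglyMeasurable
    (.of_forall (norm_inv_sub_ofReal_le hz))

lemma im_stieltjesTransform [IsFiniteMeasure μ] (hz : z.im ≠ 0) :
    (stieltjesTransform μ z).im = -z.im * ∫ t, (Complex.normSq (z - t))⁻¹ ∂μ := by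
  rw [stieltjesTransform, ← integral_const_mul]
  refine (integral_im (integrable_inv_sub_ofReal hz)).symm.trans ?_
  congr 1 with t
  simp [div_eq_mul_inv]

lemma im_mul_stieltjesTransform [IsFiniteMeasure μ] (hz : z.im ≠ 0) :
    (z * stieltjesTransform μ z).im = -z.im * ∫ t, t / Complex.normSq (z - t) ∂μ := by
  rw [stieltjesTransform, ← integral_const_mul, ← integral_const_mul]
  refine (integral_im ((integrable_inv_sub_ofReal hz).const_mul z)).symm.trans ?_
  congr 1 with t
  have hsplit : z * (z - t)⁻¹ = 1 + t * (z - t)⁻¹ := by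
    field_simp [sub_ofReal_ne_zero hz t]; ring
  simp [hsplit, Complex.inv_im]
  ring

lemma integral_inv_normSq_sub_nonneg : 0 ≤ ∫ t, (Complex.normSq (z - t))⁻¹ ∂μ :=
  integral_nonneg fun _ => inv_nonneg.2 (Complex.normSq_nonneg _)

lemma integral_div_normSq_sub_nonneg (hμ : μ (Set.Iio 0) = 0) :
    0 ≤ ∫ t, t / Complex.normSq (z - t) ∂μ := by
  have hpos : ∀ᵐ t ∂μ, 0 ≤ t := ae_iff.2 (by simp only [not_le]; exact hμ)
  exact integral_nonneg_of_ae (hpos.mono fun t ht => div_nonneg ht (Complex.normSq_nonneg _))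

end Stieltjes

section Tau

variable {k γ r A B : ℝ} {g z : ℂ}

lemma im_tau (hA : g.im = -z.im * A) (hB : (z * g).im = -z.im * B) :
    (tau k γ r g z).im =
      z.im * (1 + k * B + γ * k * A / Complex.normSq (1 - (k : ℂ) * g)) := by
  have hw : (1 - (k : ℂ) * g).im = k * z.im * A := by simp [hA]; ring
  have hwz : ((1 - (k : ℂ) * g) * z).im = z.im + k * z.im * B := by
    rw [sub_mul, one_mul, mul_assoc, mul_comm g z, Complex.sub_im, Complex.im_ofReal_mul, hB]
    ring
  rw [tau, Complex.sub_im, Complex.sub_im, hwz, div_eq_mul_inv, Complex.im_ofReal_mul,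
    Complex.inv_im, hw, Complex.ofReal_im]
  ring

lemma abs_im_le_abs_im_tau (hk : 0 ≤ k) (hγ : 0 ≤ γ) (hA₀ : 0 ≤ A) (hB₀ : 0 ≤ B)
    (hA : g.im = -z.im * A) (hB : (z * g).im = -z.im * B) :
    |z.im| ≤ |(tau k γ r g z).im| := by
  have hfactor : 1 ≤ 1 + k * B + γ * k * A / Complex.normSq (1 - (k : ℂ) * g) := by
    have := Complex.normSq_nonneg (1 - (k : ℂ) * g)
    have : 0 ≤ γ * k * A / Complex.normSq (1 - (k : ℂ) * g) := by positivity
    nlinarith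
  rw [im_tau hA hB, abs_mul, abs_of_pos (zero_lt_one.trans_le hfactor)]
  exact le_mul_of_one_le_right (abs_nonneg _) hfactor

end Tau

theorem im_tau_lower_bound_general (μ : Measure ℝ) [IsProbabilityMeasure μ]
    (hsupp : μ (Set.Iio 0) = 0) (σ c γ : ℝ) (hc0 : 0 < c)
    (hγ : 0 ≤ γ) (z : ℂ) (hz : z.im ≠ 0) :
    let g : ℂ := ∫ t, (z - (t : ℂ))⁻¹ ∂μ
    let τ : ℂ := (1 - ((σ ^ 2 * c : ℝ) : ℂ) * g) * z -
      (γ : ℂ) / (1 - ((σ ^ 2 * c : ℝ) : ℂ) * g) - ((σ ^ 2 * (1 - c) : ℝ) : ℂ)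
    |τ.im| ≥ |z.im| ∧ ‖τ‖⁻¹ ≤ |z.im|⁻¹ := by
  intro g τ
  have hmain : |z.im| ≤ |τ.im| :=
    abs_im_le_abs_im_tau (by positivity) hγ integral_inv_normSq_sub_nonneg
      (integral_div_normSq_sub_nonneg hsupp) (im_stieltjesTransform hz)
      (im_mul_stieltjesTransform hz)
  exact ⟨hmain, inv_anti₀ (abs_pos.2 hz) (hmain.trans (Complex.abs_im_le_norm τ))⟩

/-- For a probability measure `μ` supported in `[0,∞)` with Stieltjes transform `g_μ`,
`σ > 0`, `c ∈ (0,1]`, `γ ≥ 0`, the quantity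
`τ(z) = (1 - σ²c g_μ(z)) z - γ/(1 - σ²c g_μ(z)) - σ²(1-c)` satisfies
`|Im τ(z)| ≥ |Im z|`, and in particular `|τ(z)|⁻¹ ≤ |Im z|⁻¹`. -/
theorem im_tau_lower_bound (μ : Measure ℝ) [IsProbabilityMeasure μ]
    (hsupp : μ (Set.Iio 0) = 0) (σ c γ : ℝ) (hσ : 0 < σ) (hc0 : 0 < c) (hc1 : c ≤ 1)
    (hγ : 0 ≤ γ) (z : ℂ) (hz : z.im ≠ 0) :
    let g : ℂ := ∫ t, (z - (t : ℂ))⁻¹ ∂μ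
    let τ : ℂ := (1 - ((σ ^ 2 * c : ℝ) : ℂ) * g) * z -
      (γ : ℂ) / (1 - ((σ ^ 2 * c : ℝ) : ℂ) * g) - ((σ ^ 2 * (1 - c) : ℝ) : ℂ)
    |τ.im| ≥ |z.im| ∧ ‖τ‖⁻¹ ≤ |z.im|⁻¹ :=
  im_tau_lower_bound_general μ hsupp σ c γ hc0 hγ z hz
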